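/- arXiv:1609.07363 — 5 statements merged into one kernel-verified Lean document; each statement's English description precedes it below -/
import Mathlib

section
/- Let the loss function be γ(y;θ) = g(|y−θ|), where g : [0,∞) → [0,∞) is increasing and unbounded with g(0) = 0. Fix n ≥ 1, an index t ∈ {1,…,n}, a penalty β > 0, and fixed values y_s ∈ ℝ for all s ≠ t. Then there exists M ∈ ℝ such that for every value y_t > M, every segmentation τ_{1:k} minimising the penalised cost Q(y_{1:n}; τ_{1:k}) has changepoints at both t−1 and t (that is, both t−1 and t belong to the set {τ_0, τ_1, …, τ_{k+1}}). -/
/-!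
Isolating every observation in its own segment costs `n β` whatever the value of `y_t`, since a
singleton segment has cost `g 0 = 0`. On the other hand, a segment containing `t` and another
index `j` costs at least `g (|y_t - y_j| / 2)`: any location `θ` lies at distance at least
`|y_t - y_j| / 2` from one of the two observations. Once `y_t` is so large that this exceeds
`n β` for the neighbours `j = t ± 1`, the segment of an optimal segmentation containing `t`
contains neither `t - 1` nor `t + 1`, so it is exactly `{t}`.
-/

open MeasureTheory Finset

/-- Cost of the segment consisting of data points `y_{s+1}, …, y_t`:
the infimum over the location parameter `θ` of the summed loss. -/
noncomputable def segCost (γ : ℝ → ℝ → ℝ) (y : ℕ → ℝ) (s t : ℕ) : ℝ :=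
  ⨅ θ : ℝ, ∑ i ∈ Finset.Ioc s t, γ (y i) θ

/-- `τ : ℕ → ℕ` encodes a valid segmentation of `y_{1:n}` with `k` changepoints
`0 = τ 0 < τ 1 < ⋯ < τ k < τ (k+1) = n`. -/
def ValidSeg (n k : ℕ) (τ : ℕ → ℕ) : Prop :=
  τ 0 = 0 ∧ τ (k + 1) = n ∧ ∀ i ≤ k, τ i < τ (i + 1)

/-- Penalised cost of a segmentation. -/
noncomputable def penCost (γ : ℝ → ℝ → ℝ) (y : ℕ → ℝ) (β : ℝ) (k : ℕ) (τ : ℕ → ℕ) : ℝ :=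
  ∑ i ∈ Finset.range (k + 1), (segCost γ y (τ i) (τ (i + 1)) + β)

theorem validSeg_id (k : ℕ) : ValidSeg (k + 1) k id :=
  ⟨rfl, rfl, fun i _ => i.lt_succ_self⟩

theorem exists_mem_Ioc_apply_succ {k t : ℕ} {τ : ℕ → ℕ} (h0 : τ 0 < t) (hk : t ≤ τ (k + 1)) :
    ∃ i ≤ k, t ∈ Ioc (τ i) (τ (i + 1)) := by
  classical
  have hex : ∃ j, t ≤ τ j := ⟨k + 1, hk⟩
  obtain ⟨i, hi⟩ : ∃ i, Nat.find hex = i + 1 :=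
    Nat.exists_eq_succ_of_ne_zero fun hzero => by
      have := Nat.find_spec hex
      rw [hzero] at this
      omega
  have hik : i + 1 ≤ k + 1 := hi ▸ Nat.find_min' hex hk
  refine ⟨i, by omega, mem_Ioc.2 ⟨lt_of_not_ge (Nat.find_min hex (by omega)), ?_⟩⟩
  exact hi ▸ Nat.find_spec hex

section Cost

variable {γ : ℝ → ℝ → ℝ}

theorem segCost_nonneg (hγ : ∀ a θ, 0 ≤ γ a θ) (y : ℕ → ℝ) (s e : ℕ) :
    0 ≤ segCost γ y s e :=
  Real.iInf_nonneg fun _ => sum_nonneg fun _ _ => hγ _ _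

theorem segCost_self_succ (hγ : ∀ a θ, 0 ≤ γ a θ) (hγ_self : ∀ a, γ a a = 0) (y : ℕ → ℝ)
    (s : ℕ) : segCost γ y s (s + 1) = 0 := by
  refine le_antisymm ?_ (segCost_nonneg hγ y s (s + 1))
  rw [segCost, Nat.Ioc_succ_singleton]
  simp only [sum_singleton]
  exact (ciInf_le ⟨0, Set.forall_mem_range.2 (hγ _)⟩ (y (s + 1))).trans_eq (hγ_self _)

theorem penCost_id (hγ : ∀ a θ, 0 ≤ γ a θ) (hγ_self : ∀ a, γ a a = 0) (y : ℕ → ℝ) (β : ℝ)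
    (k : ℕ) : penCost γ y β k id = (k + 1) * β := by
  simp [penCost, segCost_self_succ hγ hγ_self]

theorem segCost_le_penCost (hγ : ∀ a θ, 0 ≤ γ a θ) {β : ℝ} (hβ : 0 ≤ β) (y : ℕ → ℝ)
    {k i : ℕ} (τ : ℕ → ℕ) (hi : i ≤ k) :
    segCost γ y (τ i) (τ (i + 1)) ≤ penCost γ y β k τ := by
  have := single_le_sum (f := fun j => segCost γ y (τ j) (τ (j + 1)) + β)
    (fun j _ => add_nonneg (segCost_nonneg hγ y _ _) hβ) (mem_range.2 (Nat.lt_succ_of_le hi))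
  unfold penCost
  linarith

end Cost

section DistanceLoss

variable {g : ℝ → ℝ}

theorem half_abs_sub_le_add (hg_nonneg : ∀ x, 0 ≤ x → 0 ≤ g x)
    (hg_mono : MonotoneOn g (Set.Ici 0)) (a b θ : ℝ) :
    g (|a - b| / 2) ≤ g |a - θ| + g |b - θ| := by
  have htri : |a - b| ≤ |a - θ| + |b - θ| := abs_sub_comm θ b ▸ abs_sub_le a θ b
  have hhalf : (0 : ℝ) ≤ |a - b| / 2 := by positivity
  rcases le_total (|a - b| / 2) |a - θ| with h | h
  · linarith [hg_mono hhalf (abs_nonneg (a - θ)) h, hg_nonneg _ (abs_nonneg (b - θ))]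
  · have h' : |a - b| / 2 ≤ |b - θ| := by linarith
    linarith [hg_mono hhalf (abs_nonneg (b - θ)) h', hg_nonneg _ (abs_nonneg (a - θ))]

theorem half_abs_sub_le_segCost (hg_nonneg : ∀ x, 0 ≤ x → 0 ≤ g x)
    (hg_mono : MonotoneOn g (Set.Ici 0)) (y : ℕ → ℝ) {s e u j : ℕ} (hu : u ∈ Ioc s e)
    (hj : j ∈ Ioc s e) (huj : u ≠ j) :
    g (|y u - y j| / 2) ≤ segCost (fun a θ => g |a - θ|) y s e :=
  le_ciInf fun θ => calc
    g (|y u - y j| / 2) ≤ g |y u - θ| + g |y j - θ| :=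
      half_abs_sub_le_add hg_nonneg hg_mono _ _ θ
    _ = ∑ i ∈ {u, j}, g |y i - θ| := (sum_pair (f := fun i => g |y i - θ|) huj).symm
    _ ≤ ∑ i ∈ Ioc s e, g |y i - θ| :=
      sum_le_sum_of_subset_of_nonneg (insert_subset hu (singleton_subset_iff.2 hj))
        fun _ _ _ => hg_nonneg _ (abs_nonneg _)

end DistanceLoss

theorem extreme_outlier_forces_changepoints_general
    (g : ℝ → ℝ) (hg0 : g 0 = 0)
    (hg_nonneg : ∀ x : ℝ, 0 ≤ x → 0 ≤ g x)
    (hg_mono : MonotoneOn g (Set.Ici (0 : ℝ)))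
    (hg_unbdd : ∀ C : ℝ, ∃ x : ℝ, 0 ≤ x ∧ C < g x)
    (n : ℕ) (t : ℕ) (ht1 : 1 ≤ t) (htn : t ≤ n)
    (β : ℝ) (hβ : 0 < β) (y : ℕ → ℝ) :
    ∃ M : ℝ, ∀ v : ℝ, M < v →
      ∀ (k : ℕ) (τ : ℕ → ℕ), ValidSeg n k τ →
        (∀ (k' : ℕ) (τ' : ℕ → ℕ), ValidSeg n k' τ' →
          penCost (fun a θ => g |a - θ|) (Function.update y t v) β k τ ≤
            penCost (fun a θ => g |a - θ|) (Function.update y t v) β k' τ') →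
        (∃ j ≤ k + 1, τ j = t - 1) ∧ (∃ j ≤ k + 1, τ j = t) := by
  obtain ⟨m, rfl⟩ : ∃ m, n = m + 1 := ⟨n - 1, by omega⟩
  have hγ : ∀ a θ : ℝ, 0 ≤ g |a - θ| := fun a θ => hg_nonneg _ (abs_nonneg _)
  obtain ⟨x, hx0, hx⟩ := hg_unbdd ((m + 1) * β)
  refine ⟨max (y (t - 1)) (y (t + 1)) + 2 * x, fun v hv k τ ⟨hτ0, hτk, _⟩ hopt => ?_⟩
  obtain ⟨i, hik, hti⟩ :=
    exists_mem_Ioc_apply_succ (show τ 0 < t by omega) (show t ≤ τ (k + 1) by omega)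
  have no_neighbour : ∀ j ∈ Ioc (τ i) (τ (i + 1)), j = t - 1 ∨ j = t + 1 → False := by
    intro j hj hj_nb
    have hjt : j ≠ t := by omega
    have hyj : y j ≤ max (y (t - 1)) (y (t + 1)) := by rcases hj_nb with rfl | rfl <;> simp
    set y' := Function.update y t v with hy'
    have hgap : x ≤ |y' t - y' j| / 2 := by
      rw [hy', Function.update_self, Function.update_of_ne hjt]
      linarith [le_abs_self (v - y j)]
    have := calc
      g x ≤ g (|y' t - y' j| / 2) := hg_mono hx0 (hx0.trans hgap) hgap
      _ ≤ segCost _ y' (τ i) (τ (i + 1)) :=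
        half_abs_sub_le_segCost hg_nonneg hg_mono y' hti hj hjt.symm
      _ ≤ penCost _ y' β k τ := segCost_le_penCost hγ hβ.le y' τ hik
      _ ≤ penCost _ y' β m id := hopt m id (validSeg_id m)
      _ = (m + 1) * β := penCost_id hγ (by simp [hg0]) y' β m
    linarith
  rw [mem_Ioc] at hti
  refine ⟨⟨i, by omega, ?_⟩, ⟨i + 1, by omega, ?_⟩⟩
  · by_contra h
    exact no_neighbour (t - 1) (mem_Ioc.2 ⟨by omega, by omega⟩) (Or.inl rfl)
  · by_contra h
    exact no_neighbour (t + 1) (mem_Ioc.2 ⟨by omega, by omega⟩) (Or.inr rfl)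

/-- For an unbounded increasing loss `γ(y;θ) = g(|y−θ|)` with `g(0)=0`, fixing all data
values except `y_t`, there is an `M` such that whenever `y_t > M`, every segmentation
minimising the penalised cost has changepoints at both `t−1` and `t`. -/
theorem extreme_outlier_forces_changepoints
    (g : ℝ → ℝ) (hg0 : g 0 = 0)
    (hg_nonneg : ∀ x : ℝ, 0 ≤ x → 0 ≤ g x)
    (hg_mono : MonotoneOn g (Set.Ici (0 : ℝ)))
    (hg_unbdd : ∀ C : ℝ, ∃ x : ℝ, 0 ≤ x ∧ C < g x)
    (n : ℕ) (hn : 1 ≤ n) (t : ℕ) (ht1 : 1 ≤ t) (htn : t ≤ n)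
    (β : ℝ) (hβ : 0 < β) (y : ℕ → ℝ) :
    ∃ M : ℝ, ∀ v : ℝ, M < v →
      ∀ (k : ℕ) (τ : ℕ → ℕ), ValidSeg n k τ →
        (∀ (k' : ℕ) (τ' : ℕ → ℕ), ValidSeg n k' τ' →
          penCost (fun a θ => g |a - θ|) (Function.update y t v) β k τ ≤
            penCost (fun a θ => g |a - θ|) (Function.update y t v) β k' τ') →
        (∃ j ≤ k + 1, τ j = t - 1) ∧ (∃ j ≤ k + 1, τ j = t) :=
  extreme_outlier_forces_changepoints_general g hg0 hg_nonneg hg_mono hg_unbdd n t ht1 htn β hβ y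
end

section
/- Assume conditions (A1) and (A2) hold for the biweight loss with parameter K. Then there exist strictly positive constants α, C₁ and δ such that for every integer n ≥ 2 and every integer l with 1 ≤ l ≤ n, P( inf_{θ∈ℝ} S_l(θ) < −α log n ) ≤ C₁ n^{−(2+δ)}. -/
open MeasureTheory ProbabilityTheory Real Finset

/-!
For fixed `θ` the summands `X_i(θ)` are IID, bounded by `min (2K|θ|) K²` and, by (A1), have mean
at least `min (c₁θ²) c₂`, so Hoeffding's inequality bounds `P(S_l(θ) ≤ -s)` by `exp (-λ s)` with
`λ > 0` independent of `θ`. Since `θ ↦ S_l(θ)` is `2Kl`-Lipschitz, the infimum over `|θ| ≤ m + K`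
is handled by a union bound over a grid of mesh `s / (2Kl)`. For `|θ| > m + K` every summand
dominates `K²·1{|Z_i| ≤ m} - γ(Z_i)`, which does not depend on `θ`; (A2) gives `M(0) < K²`, so for
`m` large this minorant has positive mean and Hoeffding applies once more. With `s` a multiple of
`log n`, each of the `O(n)` events has probability at most `n⁻⁴`.
-/

section Probability

variable {Ω : Type*} [MeasurableSpace Ω] {P : Measure Ω}

theorem integral_ite_const {p : Ω → Prop} [DecidablePred p] (hp : MeasurableSet {ω | p ω})
    (r : ℝ) : ∫ ω, (if p ω then r else 0) ∂P = P.real {ω | p ω} * r := by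
  rw [← smul_eq_mul, ← integral_indicator_const r hp]
  simp only [Set.indicator_apply, Set.mem_ofPred_eq]

variable [IsProbabilityMeasure P]

theorem integrable_ite_const {p : Ω → Prop} [DecidablePred p] (hp : MeasurableSet {ω | p ω})
    (r : ℝ) : Integrable (fun ω => if p ω then r else 0) P :=
  .of_bound (Measurable.ite hp measurable_const measurable_const).aestronglyMeasurable |r|
    (ae_of_all P fun ω => by split_ifs <;> simp)

theorem measureReal_sum_le_neg_le_exp {ι : Type*} {Y : ι → Ω → ℝ}
    (hmeas : ∀ i, Measurable (Y i)) (hindep : iIndepFun Y P) {c μ s : ℝ}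
    (hbd : ∀ i ω, |Y i ω| ≤ c) (hμ : ∀ i, μ ≤ P[Y i]) (hμ0 : 0 ≤ μ) (hs : 0 ≤ s)
    {S : Finset ι} (hS : S.Nonempty) :
    P.real {ω | ∑ i ∈ S, Y i ω ≤ -s} ≤ exp (-(2 * μ * s / c ^ 2)) := by
  set k : ℝ := (#S : ℝ)
  have hk : 0 < k := by simp [k, hS.card_pos]
  have hsubG : ∀ i ∈ S,
      HasSubgaussianMGF (fun ω => P[Y i] - Y i ω) ((‖c - -c‖₊ / 2) ^ 2) P := fun i _ =>
    (hasSubgaussianMGF_of_mem_Icc (hmeas i).aemeasurable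
      (ae_of_all P fun ω => abs_le.mp (hbd i ω))).neg.congr (ae_of_all P fun ω => by simp)
  have hcenter : iIndepFun (fun i ω => P[Y i] - Y i ω) P := by
    exact hindep.comp (fun i (y : ℝ) => P[Y i] - y) fun _ => measurable_const.sub measurable_id
  have hsub : {ω | ∑ i ∈ S, Y i ω ≤ -s} ⊆ {ω | k * μ + s ≤ ∑ i ∈ S, (P[Y i] - Y i ω)} := by
    intro ω hω
    have : k * μ ≤ ∑ i ∈ S, P[Y i] := by
      simpa [k] using card_nsmul_le_sum S _ μ fun i _ => hμ i
    simp only [Set.mem_ofPred_eq, sum_sub_distrib] at hω ⊢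
    linarith
  calc P.real {ω | ∑ i ∈ S, Y i ω ≤ -s}
      ≤ P.real {ω | k * μ + s ≤ ∑ i ∈ S, (P[Y i] - Y i ω)} := measureReal_mono hsub
    _ ≤ exp (-(k * μ + s) ^ 2 / (2 * (k * c ^ 2))) :=
        (HasSubgaussianMGF.measure_sum_ge_le_of_iIndepFun hcenter hsubG (by positivity)).trans_eq
          (by simp [k, ← two_mul, sq_abs])
    _ ≤ exp (-(2 * μ * s / c ^ 2)) := by
        -- AM-GM, `(kμ + s)² ≥ 4kμs`, removes the dependence on `k = #S`.
        gcongr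
        rw [neg_div, neg_le_neg_iff,
          ← mul_div_mul_left (2 * μ * s) (c ^ 2) (mul_pos two_pos hk).ne', mul_assoc 2 k (c ^ 2)]
        exact div_le_div_of_nonneg_right
          (by nlinarith [sq_nonneg (k * μ - s), mul_nonneg hk.le hs]) (by positivity)

theorem measureReal_sum_comp_le_neg_le_exp {ι : Type*} {Z : ι → Ω → ℝ} {i₀ : ι}
    (hZmeas : ∀ i, Measurable (Z i)) (hZindep : iIndepFun Z P)
    (hZident : ∀ i, IdentDistrib (Z i) (Z i₀) P P) {g : ℝ → ℝ} (hg : Measurable g)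
    {c μ s : ℝ} (hbd : ∀ z, |g z| ≤ c) (hμ : μ ≤ ∫ ω, g (Z i₀ ω) ∂P) (hμ0 : 0 ≤ μ) (hs : 0 ≤ s)
    {S : Finset ι} (hS : S.Nonempty) :
    P.real {ω | ∑ i ∈ S, g (Z i ω) ≤ -s} ≤ exp (-(2 * μ * s / c ^ 2)) :=
  measureReal_sum_le_neg_le_exp (Y := fun i => g ∘ Z i) (fun i => hg.comp (hZmeas i))
    (hZindep.comp _ fun _ => hg) (fun _ _ => hbd _)
    (fun i => hμ.trans_eq ((hZident i).comp hg).integral_eq.symm) hμ0 hs hS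

theorem tendsto_measureReal_abs_le_atTop (X : Ω → ℝ) :
    Filter.Tendsto (fun r => P.real {ω | |X ω| ≤ r}) Filter.atTop (nhds 1) := by
  have hmono : Monotone fun r : ℝ => {ω | |X ω| ≤ r} := fun r r' h ω hω => le_trans hω h
  have hunion : ⋃ r : ℝ, {ω | |X ω| ≤ r} = Set.univ :=
    Set.eq_univ_of_forall fun ω => Set.mem_iUnion.2 ⟨|X ω|, le_refl |X ω|⟩
  have h := tendsto_measure_iUnion_atTop (μ := P) hmono
  rw [hunion, measure_univ] at h
  exact (ENNReal.tendsto_toReal ENNReal.one_ne_top).comp h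

end Probability

noncomputable def biweight (K z : ℝ) : ℝ := min (z ^ 2) (K ^ 2)

section Biweight

variable {K : ℝ}

theorem biweight_nonneg (K z : ℝ) : 0 ≤ biweight K z := le_min (sq_nonneg z) (sq_nonneg K)

theorem biweight_le_sq (K z : ℝ) : biweight K z ≤ K ^ 2 := min_le_right _ _

@[fun_prop]
theorem measurable_biweight (K : ℝ) : Measurable (biweight K) :=
  (measurable_id.pow_const 2).min measurable_const

theorem abs_biweight_le_sq (K z : ℝ) : |biweight K z| ≤ K ^ 2 := by
  rw [abs_of_nonneg (biweight_nonneg K z)]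
  exact biweight_le_sq K z

theorem biweight_eq_min_abs_sq (hK : 0 ≤ K) (z : ℝ) : biweight K z = min |z| K ^ 2 := by
  rw [biweight, ← sq_abs z]
  rcases le_total |z| K with h | h
  · rw [min_eq_left h, min_eq_left (pow_le_pow_left₀ (abs_nonneg z) h 2)]
  · rw [min_eq_right h, min_eq_right (pow_le_pow_left₀ hK h 2)]

theorem abs_biweight_sub_biweight_le (hK : 0 ≤ K) (a b : ℝ) :
    |biweight K a - biweight K b| ≤ 2 * K * |a - b| := by
  rw [biweight_eq_min_abs_sq hK, biweight_eq_min_abs_sq hK, sq_sub_sq, abs_mul]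
  have hsum : |min |a| K + min |b| K| ≤ 2 * K := by
    rw [abs_of_nonneg (by positivity)]
    linarith [min_le_right |a| K, min_le_right |b| K]
  have hdiff : |min |a| K - min |b| K| ≤ |a - b| := by
    refine (abs_min_sub_min_le_max _ _ _ _).trans ?_
    rw [sub_self, abs_zero, max_eq_left (abs_nonneg _)]
    exact abs_abs_sub_abs_le_abs_sub a b
  exact mul_le_mul hsum hdiff (abs_nonneg _) (by positivity)

theorem abs_biweight_sub_sub_biweight_le (hK : 0 ≤ K) (z θ : ℝ) :
    |biweight K (z - θ) - biweight K z| ≤ min (2 * K * |θ|) (K ^ 2) := by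
  refine le_min ?_ ?_
  · simpa [abs_neg] using abs_biweight_sub_biweight_le hK (z - θ) z
  · exact abs_sub_le_of_nonneg_of_le (biweight_nonneg K _) (biweight_le_sq K _)
      (biweight_nonneg K _) (biweight_le_sq K _)

theorem biweight_eq_ite_add_ite (hK : 0 ≤ K) (z : ℝ) :
    biweight K z = (if |z| ≤ K then z ^ 2 else 0) + (if K < |z| then K ^ 2 else 0) := by
  rw [biweight_eq_min_abs_sq hK]
  split_ifs with h₁ h₂ h₂
  · exact absurd h₂ h₁.not_gt
  · rw [min_eq_left h₁, sq_abs, add_zero]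
  · rw [min_eq_right h₂.le, zero_add]
  · exact absurd (not_le.mp h₁) h₂

theorem ite_le_biweight_sub (hK : 0 ≤ K) {m θ : ℝ} (hθ : m + K < |θ|) (z : ℝ) :
    (if |z| ≤ m then K ^ 2 else 0) ≤ biweight K (z - θ) := by
  split_ifs with hz
  · refine le_min ?_ le_rfl
    rw [← sq_abs (z - θ)]
    exact pow_le_pow_left₀ hK (by linarith [abs_sub_abs_le_abs_sub θ z, abs_sub_comm θ z]) 2
  · exact biweight_nonneg K _

theorem min_div_mul_sq_le {c₁ c₂ θ : ℝ} (hK : 0 < K) (hc₁ : 0 ≤ c₁) (hc₂ : 0 ≤ c₂) :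
    min (c₁ / (4 * K ^ 2)) (c₂ / K ^ 4) * min (2 * K * |θ|) (K ^ 2) ^ 2 ≤
      min (c₁ * θ ^ 2) c₂ := by
  have hc : 0 ≤ min (2 * K * |θ|) (K ^ 2) := le_min (by positivity) (by positivity)
  refine le_min ?_ ?_
  · calc _ ≤ c₁ / (4 * K ^ 2) * (2 * K * |θ|) ^ 2 := by
          gcongr
          exacts [min_le_left _ _, min_le_left _ _]
      _ = c₁ * θ ^ 2 := by field_simp; rw [sq_abs]; ring
  · calc _ ≤ c₂ / K ^ 4 * (K ^ 2) ^ 2 := by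
          gcongr
          exacts [min_le_right _ _, min_le_right _ _]
      _ = c₂ := by field_simp

end Biweight

section Integrals

variable {Ω : Type*} [MeasurableSpace Ω] {P : Measure Ω} [IsProbabilityMeasure P] {K : ℝ}

theorem integrable_biweight_comp (K : ℝ) {X : Ω → ℝ} (hX : Measurable X) :
    Integrable (fun ω => biweight K (X ω)) P :=
  .of_bound ((measurable_biweight K).comp hX).aestronglyMeasurable (K ^ 2)
    (ae_of_all P fun ω => abs_biweight_le_sq K (X ω))

theorem integral_biweight_eq (hK : 0 ≤ K) {X : Ω → ℝ} (hX : Measurable X) :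
    ∫ ω, biweight K (X ω) ∂P =
      ∫ ω, (if |X ω| ≤ K then X ω ^ 2 else 0) ∂P + K ^ 2 * P.real {ω | K < |X ω|} := by
  have hle : MeasurableSet {ω | |X ω| ≤ K} := measurableSet_le hX.abs measurable_const
  have hlt : MeasurableSet {ω | K < |X ω|} := measurableSet_lt measurable_const hX.abs
  simp_rw [biweight_eq_ite_add_ite hK]
  rw [integral_add, integral_ite_const hlt, mul_comm]
  · refine .of_bound (Measurable.ite hle (hX.pow_const 2) measurable_const).aestronglyMeasurable
      (K ^ 2) (ae_of_all P fun _ => ?_)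
    split_ifs with h
    · rw [Real.norm_eq_abs, abs_of_nonneg (sq_nonneg _), ← sq_abs]
      exact pow_le_pow_left₀ (abs_nonneg _) h 2
    · simp [sq_nonneg]
  · exact integrable_ite_const hlt _

theorem integral_biweight_lt_sq (hK : 0 ≤ K) {X : Ω → ℝ} (hX : Measurable X)
    (hA2 : 0 < K ^ 2 * (1 - 2 * P.real {ω | K < |X ω|}) -
      ∫ ω, (if |X ω| ≤ K then X ω ^ 2 else 0) ∂P) :
    ∫ ω, biweight K (X ω) ∂P < K ^ 2 := by
  rw [integral_biweight_eq hK hX]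
  nlinarith [mul_nonneg (sq_nonneg K) (measureReal_nonneg (μ := P) (s := {ω | K < |X ω|}))]

theorem exists_le_integral_ite_sub_biweight (hK : 0 < K) {X : Ω → ℝ} (hX : Measurable X)
    (hM : ∫ ω, biweight K (X ω) ∂P < K ^ 2) :
    ∃ m, 0 ≤ m ∧ (K ^ 2 - ∫ ω, biweight K (X ω) ∂P) / 2 ≤
      ∫ ω, ((if |X ω| ≤ m then K ^ 2 else 0) - biweight K (X ω)) ∂P := by
  set M := ∫ ω, biweight K (X ω) ∂P
  have hq : (K ^ 2 + M) / (2 * K ^ 2) < 1 := by rw [div_lt_one (by positivity)]; linarith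
  obtain ⟨m, hm, hmq⟩ := ((Filter.eventually_ge_atTop 0).and
    ((tendsto_measureReal_abs_le_atTop (P := P) X).eventually_const_lt hq)).exists
  refine ⟨m, hm, ?_⟩
  rw [div_lt_iff₀ (by positivity)] at hmq
  rw [integral_sub (integrable_ite_const (measurableSet_le hX.abs measurable_const) _)
    (integrable_biweight_comp K hX), integral_ite_const (measurableSet_le hX.abs measurable_const)]
  linarith

end Integrals

theorem exists_mem_Icc_abs_sub_mul_le {η T θ : ℝ} (hη : 0 < η) (hθ : |θ| ≤ T) :
    ∃ j ∈ Icc (-⌈T / η⌉) ⌈T / η⌉, |θ - j * η| ≤ η := by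
  obtain ⟨hTθ, hθT⟩ := abs_le.mp hθ
  have hfloor := Int.floor_le (θ / η)
  have hfloor' := Int.lt_floor_add_one (θ / η)
  rw [le_div_iff₀ hη] at hfloor
  rw [div_lt_iff₀ hη] at hfloor'
  refine ⟨⌊θ / η⌋, mem_Icc.mpr ⟨?_, ?_⟩, abs_le.mpr ⟨by linarith, by linarith⟩⟩
  · rw [← Int.floor_neg, ← neg_div]
    exact Int.floor_mono (by gcongr)
  · exact (Int.floor_le_ceil _).trans (Int.ceil_mono (by gcongr))

theorem sum_biweight_sub_le_add_of_abs_sub_le {ι : Type*} {S : Finset ι} {z : ι → ℝ} {K θ θ' η : ℝ}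
    (hK : 0 ≤ K) (hθ : |θ - θ'| ≤ η) :
    ∑ i ∈ S, (biweight K (z i - θ') - biweight K (z i)) ≤
      ∑ i ∈ S, (biweight K (z i - θ) - biweight K (z i)) + 2 * K * #S * η := by
  have hterm : ∀ i ∈ S, biweight K (z i - θ') - biweight K (z i) ≤
      biweight K (z i - θ) - biweight K (z i) + 2 * K * η := fun i _ => by
    have h := abs_biweight_sub_biweight_le hK (z i - θ') (z i - θ)
    rw [sub_sub_sub_cancel_left] at h
    nlinarith [abs_le.mp h, mul_le_mul_of_nonneg_left hθ (by positivity : 0 ≤ 2 * K)]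
  calc _ ≤ ∑ i ∈ S, (biweight K (z i - θ) - biweight K (z i) + 2 * K * η) := sum_le_sum hterm
    _ = _ := by rw [sum_add_distrib, sum_const, nsmul_eq_mul]; ring

theorem far_or_grid_of_iInf_sum_biweight_sub_lt {ι : Type*} {S : Finset ι} {z : ι → ℝ}
    {K m η s : ℝ} (hK : 0 ≤ K) (hη : 0 < η) (hηs : 2 * K * #S * η ≤ s)
    (h : ⨅ θ, ∑ i ∈ S, (biweight K (z i - θ) - biweight K (z i)) < -(2 * s)) :
    ∑ i ∈ S, ((if |z i| ≤ m then K ^ 2 else 0) - biweight K (z i)) ≤ -s ∨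
      ∃ j ∈ Icc (-⌈(m + K) / η⌉) ⌈(m + K) / η⌉,
        ∑ i ∈ S, (biweight K (z i - j * η) - biweight K (z i)) ≤ -s := by
  obtain ⟨θ, hθ⟩ := exists_lt_of_ciInf_lt h
  have hs : 0 ≤ s := le_trans (by positivity) hηs
  by_cases hnear : |θ| ≤ m + K
  · obtain ⟨j, hj, hjθ⟩ := exists_mem_Icc_abs_sub_mul_le hη hnear
    have hclose := sum_biweight_sub_le_add_of_abs_sub_le (S := S) (z := z) hK hjθ
    exact Or.inr ⟨j, hj, by linarith⟩
  · refine Or.inl (le_trans (sum_le_sum fun i _ => ?_) (by linarith))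
    exact sub_le_sub_right (ite_le_biweight_sub hK (not_le.mp hnear) (z i)) _

section Covering

variable {Ω : Type*} [MeasurableSpace Ω] {P : Measure Ω} [IsFiniteMeasure P]

theorem measureReal_iInf_sum_biweight_sub_lt_le {ι : Type*} {Z : ι → Ω → ℝ} {S : Finset ι}
    (hS : S.Nonempty) {K m s b : ℝ} (hK : 0 < K) (hm : 0 ≤ m) (hs : 0 < s)
    (hfar : P.real {ω | ∑ i ∈ S, ((if |Z i ω| ≤ m then K ^ 2 else 0) - biweight K (Z i ω)) ≤ -s}
      ≤ b)
    (hnear : ∀ θ, P.real {ω | ∑ i ∈ S, (biweight K (Z i ω - θ) - biweight K (Z i ω)) ≤ -s} ≤ b) :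
    P.real {ω | ⨅ θ, ∑ i ∈ S, (biweight K (Z i ω - θ) - biweight K (Z i ω)) < -(2 * s)} ≤
      (4 * K * (m + K) * #S / s + 4) * b := by
  have hcard : (0 : ℝ) < #S := by exact_mod_cast hS.card_pos
  set η := s / (2 * K * #S)
  have hη : 0 < η := by positivity
  have hηs : 2 * K * #S * η = s := by simp only [η]; field_simp
  set N := ⌈(m + K) / η⌉
  have hsub : {ω | ⨅ θ, ∑ i ∈ S, (biweight K (Z i ω - θ) - biweight K (Z i ω)) < -(2 * s)} ⊆
      {ω | ∑ i ∈ S, ((if |Z i ω| ≤ m then K ^ 2 else 0) - biweight K (Z i ω)) ≤ -s} ∪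
        ⋃ j ∈ Icc (-N) N,
          {ω | ∑ i ∈ S, (biweight K (Z i ω - j * η) - biweight K (Z i ω)) ≤ -s} := fun ω hω => by
    rcases far_or_grid_of_iInf_sum_biweight_sub_lt hK.le hη hηs.le hω with h | ⟨j, hj, h⟩
    · exact Or.inl h
    · exact Or.inr (Set.mem_biUnion hj h)
  have hN : (#(Icc (-N) N) : ℝ) ≤ 4 * K * (m + K) * #S / s + 3 := by
    have hN0 : 0 ≤ N := Int.ceil_nonneg (by positivity)
    have hcardN : ((#(Icc (-N) N) : ℤ) : ℝ) = 2 * N + 1 := by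
      rw [Int.card_Icc_of_le _ _ (by linarith)]
      push_cast
      ring
    have hNlt := Int.ceil_lt_add_one ((m + K) / η)
    have hdiv : 4 * K * (m + K) * #S / s = 2 * ((m + K) / η) := by simp only [η]; field_simp; ring
    rw [Int.cast_natCast] at hcardN
    rw [hcardN]
    linarith
  have hb : 0 ≤ b := measureReal_nonneg.trans hfar
  calc _ ≤ P.real {ω | ∑ i ∈ S, ((if |Z i ω| ≤ m then K ^ 2 else 0) - biweight K (Z i ω)) ≤ -s} +
        ∑ j ∈ Icc (-N) N,
          P.real {ω | ∑ i ∈ S, (biweight K (Z i ω - j * η) - biweight K (Z i ω)) ≤ -s} :=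
        (measureReal_mono hsub).trans ((measureReal_union_le _ _).trans
          (add_le_add le_rfl (measureReal_biUnion_finset_le _ _)))
    _ ≤ b + #(Icc (-N) N) * b := by
        gcongr
        exact (sum_le_card_nsmul _ _ b fun j _ => hnear _).trans_eq (nsmul_eq_mul _ _)
    _ ≤ _ := by nlinarith

end Covering

section IID

variable {Ω : Type*} [MeasurableSpace Ω] {P : Measure Ω} [IsProbabilityMeasure P]
  {ι : Type*} {Z : ι → Ω → ℝ} {i₀ : ι} {K s : ℝ} {S : Finset ι}

theorem measureReal_sum_biweight_sub_le_neg_le (hK : 0 < K) (hZmeas : ∀ i, Measurable (Z i))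
    (hZindep : iIndepFun Z P) (hZident : ∀ i, IdentDistrib (Z i) (Z i₀) P P) {c₁ c₂ θ : ℝ}
    (hc₁ : 0 ≤ c₁) (hc₂ : 0 ≤ c₂)
    (hM : ∫ ω, biweight K (Z i₀ ω) ∂P + min (c₁ * θ ^ 2) c₂ ≤ ∫ ω, biweight K (Z i₀ ω - θ) ∂P)
    (hs : 0 < s) (hS : S.Nonempty) :
    P.real {ω | ∑ i ∈ S, (biweight K (Z i ω - θ) - biweight K (Z i ω)) ≤ -s} ≤
      exp (-(2 * min (c₁ / (4 * K ^ 2)) (c₂ / K ^ 4) * s)) := by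
  rcases eq_or_ne θ 0 with rfl | hθ
  · simp [hs.not_ge, exp_nonneg]
  have hc : 0 < min (2 * K * |θ|) (K ^ 2) := lt_min (by positivity) (by positivity)
  have hmean : min (c₁ * θ ^ 2) c₂ ≤
      ∫ ω, (biweight K (Z i₀ ω - θ) - biweight K (Z i₀ ω)) ∂P := by
    rw [integral_sub (integrable_biweight_comp K ((hZmeas i₀).sub_const θ))
      (integrable_biweight_comp K (hZmeas i₀))]
    linarith
  refine (measureReal_sum_comp_le_neg_le_exp hZmeas hZindep hZident
    (g := fun z => biweight K (z - θ) - biweight K z) (by fun_prop)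
    (abs_biweight_sub_sub_biweight_le hK.le · θ) hmean (le_min (by positivity) hc₂) hs.le
    hS).trans ?_
  rw [exp_le_exp, neg_le_neg_iff, le_div_iff₀ (by positivity)]
  nlinarith [min_div_mul_sq_le (θ := θ) hK hc₁ hc₂]

theorem measureReal_sum_ite_sub_biweight_le_neg_le (hZmeas : ∀ i, Measurable (Z i))
    (hZindep : iIndepFun Z P) (hZident : ∀ i, IdentDistrib (Z i) (Z i₀) P P) {m μ : ℝ}
    (hμ0 : 0 ≤ μ)
    (hμ : μ ≤ ∫ ω, ((if |Z i₀ ω| ≤ m then K ^ 2 else 0) - biweight K (Z i₀ ω)) ∂P)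
    (hs : 0 ≤ s) (hS : S.Nonempty) :
    P.real {ω | ∑ i ∈ S, ((if |Z i ω| ≤ m then K ^ 2 else 0) - biweight K (Z i ω)) ≤ -s} ≤
      exp (-(2 * μ * s / (K ^ 2) ^ 2)) :=
  measureReal_sum_comp_le_neg_le_exp hZmeas hZindep hZident
    (g := fun z => (if |z| ≤ m then K ^ 2 else 0) - biweight K z)
    ((Measurable.ite (measurableSet_le measurable_abs measurable_const) measurable_const
      measurable_const).sub (measurable_biweight K))
    (fun z => abs_sub_le_of_nonneg_of_le (by split_ifs <;> positivity)
      (by split_ifs; exacts [le_rfl, sq_nonneg K])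
      (biweight_nonneg K z) (biweight_le_sq K z)) hμ hμ0 hs hS

end IID

theorem add_mul_exp_neg_four_mul_log_le {n l : ℕ} (hn : 2 ≤ n) (hln : l ≤ n) {A : ℝ} (hA : 0 ≤ A) :
    (A * l / log n + 4) * exp (-(4 * log n)) ≤ (A / log 2 + 4) * (n : ℝ) ^ (-(2 + 1 : ℝ)) := by
  have hn0 : (0 : ℝ) < n := by positivity
  have hlog2 : 0 < log 2 := log_pos one_lt_two
  have hlog : log 2 ≤ log n := log_le_log two_pos (by exact_mod_cast hn)
  have hrpow : (n : ℝ) ^ (-(2 + 1 : ℝ)) = exp (-(4 * log n)) * n := by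
    rw [rpow_def_of_pos hn0]
    nth_rewrite 3 [← exp_log hn0]
    rw [← exp_add]
    ring_nf
  have hcount : A * l / log n ≤ A / log 2 * n := by
    rw [div_mul_eq_mul_div]
    exact div_le_div₀ (by positivity) (by gcongr) hlog2 hlog
  rw [hrpow, mul_comm (exp _) (n : ℝ), ← mul_assoc]
  gcongr
  nlinarith [(by exact_mod_cast (by omega : 1 ≤ n) : (1 : ℝ) ≤ n)]

theorem inf_partial_sum_lower_tail_general
    {Ω : Type*} [MeasurableSpace Ω] (P : Measure Ω) [IsProbabilityMeasure P]
    (K : ℝ) (hK : 0 < K)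
    (Z : ℕ → Ω → ℝ) (hZmeas : ∀ i, Measurable (Z i))
    (hZindep : iIndepFun Z P)
    (hZident : ∀ i, IdentDistrib (Z i) (Z 0) P P)
    -- Condition (A1): `M(θ) = E[min{(Z−θ)², K²}]` is minimised at `0` and grows
    -- at least like `min{c₁θ², c₂}`.
    (c₁ c₂ : ℝ) (hc₁ : 0 < c₁) (hc₂ : 0 < c₂)
    (hA1 : ∀ θ : ℝ,
      (∫ ω, min ((Z 0 ω - (0 : ℝ)) ^ 2) (K ^ 2) ∂P) + min (c₁ * θ ^ 2) c₂ ≤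
        ∫ ω, min ((Z 0 ω - θ) ^ 2) (K ^ 2) ∂P)
    -- Condition (A2): `K²(1−2p) − (1−p)σ² > 0`, with
    -- `(1−p)σ² = E[Z²·1_{|Z| ≤ K}]` and `p = P(|Z| > K)`.
    (hA2 : 0 < K ^ 2 * (1 - 2 * (P {ω | K < |Z 0 ω|}).toReal) -
        ∫ ω, (if |Z 0 ω| ≤ K then (Z 0 ω) ^ 2 else 0) ∂P) :
    ∃ α C₁ δ : ℝ, 0 < α ∧ 0 < C₁ ∧ 0 < δ ∧
      ∀ n : ℕ, 2 ≤ n → ∀ l : ℕ, 1 ≤ l → l ≤ n →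
        (P {ω | (⨅ θ : ℝ, ∑ i ∈ Finset.Icc 1 l,
            (min ((Z i ω - θ) ^ 2) (K ^ 2) - min ((Z i ω) ^ 2) (K ^ 2))) <
              -α * Real.log n}).toReal ≤ C₁ * (n : ℝ) ^ (-(2 + δ)) := by
  have hM₀ := integral_biweight_lt_sq (P := P) hK.le (hZmeas 0) hA2
  obtain ⟨m, hm, hfar⟩ := exists_le_integral_ite_sub_biweight hK (hZmeas 0) hM₀
  set κ := min (c₁ / (4 * K ^ 2)) (c₂ / K ^ 4)
  set a := (K ^ 2 - ∫ ω, biweight K (Z 0 ω) ∂P) / 2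
  have ha : 0 < a := div_pos (sub_pos.2 hM₀) two_pos
  set lam := min (2 * κ) (2 * a / (K ^ 2) ^ 2)
  have hlam : 0 < lam := lt_min (by positivity) (by positivity)
  refine ⟨8 / lam, K * (m + K) * lam / log 2 + 4, 1, by positivity, by positivity, one_pos,
    fun n hn l hl hln => ?_⟩
  have hlog : 0 < log n := log_pos (by exact_mod_cast hn)
  set s := 4 * log n / lam
  have hs : 0 < s := by positivity
  have hS : (Icc 1 l).Nonempty := nonempty_Icc.2 hl
  have hbound := measureReal_iInf_sum_biweight_sub_lt_le (P := P) hS hK hm hs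
    (b := exp (-(lam * s)))
    ((measureReal_sum_ite_sub_biweight_le_neg_le hZmeas hZindep hZident ha.le hfar hs.le hS).trans
      (exp_le_exp.2 (neg_le_neg (by
        rw [mul_div_right_comm]; exact mul_le_mul_of_nonneg_right (min_le_right _ _) hs.le))))
    (fun θ => (measureReal_sum_biweight_sub_le_neg_le hK hZmeas hZindep hZident hc₁.le hc₂.le
      (by simpa only [biweight, sub_zero] using hA1 θ) hs hS).trans
      (exp_le_exp.2 (neg_le_neg (mul_le_mul_of_nonneg_right (min_le_left _ _) hs.le))))
  rw [show -(8 / lam) * log n = -(2 * s) by ring]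
  calc _ ≤ _ := hbound
    _ = (K * (m + K) * lam * l / log n + 4) * exp (-(4 * log n)) := by
        simp only [s, Nat.card_Icc, add_tsub_cancel_right]
        field_simp
    _ ≤ _ := add_mul_exp_neg_four_mul_log_le hn hln (by positivity)

/-- Lemma 1 of the paper: under conditions (A1) and (A2) for the biweight loss with
parameter `K`, there are strictly positive constants `α, C₁, δ` such that for every
`n ≥ 2` and `1 ≤ l ≤ n`,
`P( inf_θ S_l(θ) < −α log n ) ≤ C₁ n^{−(2+δ)}`,
where `S_l(θ) = Σ_{i=1}^l [min{(Z_i−θ)², K²} − min{Z_i², K²}]` for IID noise `Z_i`. -/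
theorem inf_partial_sum_lower_tail
    {Ω : Type*} [MeasurableSpace Ω] (P : Measure Ω) [IsProbabilityMeasure P]
    (K : ℝ) (hK : 0 < K)
    (Z : ℕ → Ω → ℝ) (hZmeas : ∀ i, Measurable (Z i))
    (hZindep : iIndepFun Z P)
    (hZident : ∀ i, IdentDistrib (Z i) (Z 0) P P)
    -- Condition (A1): `M(θ) = E[min{(Z−θ)², K²}]` is minimised at `0` and grows
    -- at least like `min{c₁θ², c₂}`.
    (c₁ c₂ : ℝ) (hc₁ : 0 < c₁) (hc₂ : 0 < c₂)
    (hA1min : ∀ θ : ℝ,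
      (∫ ω, min ((Z 0 ω - (0 : ℝ)) ^ 2) (K ^ 2) ∂P) ≤
        ∫ ω, min ((Z 0 ω - θ) ^ 2) (K ^ 2) ∂P)
    (hA1 : ∀ θ : ℝ,
      (∫ ω, min ((Z 0 ω - (0 : ℝ)) ^ 2) (K ^ 2) ∂P) + min (c₁ * θ ^ 2) c₂ ≤
        ∫ ω, min ((Z 0 ω - θ) ^ 2) (K ^ 2) ∂P)
    -- Condition (A2): `K²(1−2p) − (1−p)σ² > 0`, with
    -- `(1−p)σ² = E[Z²·1_{|Z| ≤ K}]` and `p = P(|Z| > K)`.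
    (hA2 : 0 < K ^ 2 * (1 - 2 * (P {ω | K < |Z 0 ω|}).toReal) -
        ∫ ω, (if |Z 0 ω| ≤ K then (Z 0 ω) ^ 2 else 0) ∂P) :
    ∃ α C₁ δ : ℝ, 0 < α ∧ 0 < C₁ ∧ 0 < δ ∧
      ∀ n : ℕ, 2 ≤ n → ∀ l : ℕ, 1 ≤ l → l ≤ n →
        (P {ω | (⨅ θ : ℝ, ∑ i ∈ Finset.Icc 1 l,
            (min ((Z i ω - θ) ^ 2) (K ^ 2) - min ((Z i ω) ^ 2) (K ^ 2))) <
              -α * Real.log n}).toReal ≤ C₁ * (n : ℝ) ^ (-(2 + δ)) :=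
  inf_partial_sum_lower_tail_general P K hK Z hZmeas hZindep hZident c₁ c₂ hc₁ hc₂ hA1 hA2
end

section
/- Suppose that for each data point y_i, the map θ ↦ γ(y_i;θ) is convex and piecewise quadratic on L intervals. Then for every 1 ≤ t ≤ n, the function θ ↦ Q_t(θ) is piecewise quadratic on at most 2t − 1 + t(L−1) intervals. -/
/-!
Writing `F(s)` for the optimal penalised cost of `y_{1:s}`, one has
`Q_t(θ) = min_{s < t} (F(s) + ∑_{j=s+1}^t γ(y_j;θ) + β)`. Every candidate is quadratic between
consecutive points of the union of the breakpoints of the losses, at most `t(L-1)` points. For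
`s < r` candidate `s` minus candidate `r` is a constant plus `∑_{j=s+1}^r γ(y_j;θ)`, hence convex,
so the set where the earliest candidate is below the minimum of the later ones is an interval.
Taking the minimum one candidate at a time therefore adds at most two breakpoints per further
candidate: `t(L-1) + 2(t-1)` breakpoints, i.e. `2t - 1 + t(L-1)` intervals.
-/

open MeasureTheory Finset

/-- `τ : ℕ → ℕ` encodes an element of `S_t`: changepoints
`0 = τ 0 < τ 1 < ⋯ < τ k < t` (with `k = 0` meaning no changepoints). -/
def LastSeg (t k : ℕ) (τ : ℕ → ℕ) : Prop :=
  τ 0 = 0 ∧ τ k < t ∧ ∀ i < k, τ i < τ (i + 1)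

/-- `Q_t(θ)`: the minimum penalised cost of segmenting `y_{1:t}` conditional on the
most recent segment having location parameter `θ`. -/
noncomputable def condCost (γ : ℝ → ℝ → ℝ) (y : ℕ → ℝ) (β : ℝ) (t : ℕ) (θ : ℝ) : ℝ :=
  sInf {c : ℝ | ∃ (k : ℕ) (τ : ℕ → ℕ), LastSeg t k τ ∧
    c = (∑ i ∈ Finset.range k, (segCost γ y (τ i) (τ (i + 1)) + β)) +
        (∑ j ∈ Finset.Ioc (τ k) t, γ (y j) θ) + β}

/-- `f` is piecewise quadratic on (at most) `N` intervals: there are points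
`−∞ = a_0 < a_1 < ⋯ < a_{N−1} < a_N = ∞` such that on each `(a_{j}, a_{j+1}]`, `f`
agrees with a polynomial of degree at most `2`. -/
def IsPiecewiseQuad (f : ℝ → ℝ) (N : ℕ) : Prop :=
  ∃ a : ℕ → EReal, a 0 = ⊥ ∧ a N = ⊤ ∧ (∀ j < N, a j < a (j + 1)) ∧
    ∀ j < N, ∃ c₀ c₁ c₂ : ℝ, ∀ x : ℝ,
      a j < (x : EReal) → (x : EReal) ≤ a (j + 1) → f x = c₀ + c₁ * x + c₂ * x ^ 2

def IsQuadOn (f : ℝ → ℝ) (S : Set ℝ) : Prop :=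
  ∃ c₀ c₁ c₂ : ℝ, ∀ x ∈ S, f x = c₀ + c₁ * x + c₂ * x ^ 2

namespace IsQuadOn

variable {f g : ℝ → ℝ} {S T : Set ℝ}

lemma mono (hf : IsQuadOn f S) (hTS : T ⊆ S) : IsQuadOn f T :=
  let ⟨c₀, c₁, c₂, h⟩ := hf
  ⟨c₀, c₁, c₂, fun x hx => h x (hTS hx)⟩

lemma congr (hf : IsQuadOn f S) (hfg : Set.EqOn f g S) : IsQuadOn g S :=
  let ⟨c₀, c₁, c₂, h⟩ := hf
  ⟨c₀, c₁, c₂, fun x hx => (hfg hx).symm.trans (h x hx)⟩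

lemma const (c : ℝ) : IsQuadOn (fun _ => c) S :=
  ⟨c, 0, 0, fun _ _ => by ring⟩

lemma add (hf : IsQuadOn f S) (hg : IsQuadOn g S) : IsQuadOn (fun x => f x + g x) S := by
  obtain ⟨a₀, a₁, a₂, ha⟩ := hf
  obtain ⟨b₀, b₁, b₂, hb⟩ := hg
  exact ⟨a₀ + b₀, a₁ + b₁, a₂ + b₂, fun x hx => by simp only [ha x hx, hb x hx]; ring⟩

lemma sum {ι : Type*} (s : Finset ι) {F : ι → ℝ → ℝ} (hF : ∀ i ∈ s, IsQuadOn (F i) S) :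
    IsQuadOn (fun x => ∑ i ∈ s, F i x) S := by
  simpa only [← Finset.sum_apply] using
    Finset.sum_induction F (IsQuadOn · S) (fun _ _ => add) (const 0) hF

end IsQuadOn

/-- The cell `(p, p']` between consecutive breakpoints of `P` that contains `x`. -/
def cell (P : Finset ℝ) (x : ℝ) : Set ℝ := {y | ∀ p ∈ P, p < x ↔ p < y}

lemma cell_anti {P P' : Finset ℝ} (h : P ⊆ P') (x : ℝ) : cell P' x ⊆ cell P x :=
  fun _ hy p hp => hy p (h hp)

lemma cell_eq_of_mem {P : Finset ℝ} {x y : ℝ} (hy : y ∈ cell P x) : cell P y = cell P x := by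
  ext z
  exact forall₂_congr fun p hp => by rw [hy p hp]

def IsPiecewiseQuadWith (f : ℝ → ℝ) (P : Finset ℝ) : Prop := ∀ x, IsQuadOn f (cell P x)

namespace IsPiecewiseQuadWith

variable {f : ℝ → ℝ} {P : Finset ℝ}

lemma mono (hf : IsPiecewiseQuadWith f P) {P' : Finset ℝ} (h : P ⊆ P') :
    IsPiecewiseQuadWith f P' :=
  fun x => (hf x).mono (cell_anti h x)

lemma const (c : ℝ) : IsPiecewiseQuadWith (fun _ => c) P := fun _ => IsQuadOn.const c

lemma add {g : ℝ → ℝ} (hf : IsPiecewiseQuadWith f P) (hg : IsPiecewiseQuadWith g P) :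
    IsPiecewiseQuadWith (fun x => f x + g x) P :=
  fun x => (hf x).add (hg x)

lemma sum {ι : Type*} (s : Finset ι) {F : ι → ℝ → ℝ}
    (hF : ∀ i ∈ s, IsPiecewiseQuadWith (F i) P) :
    IsPiecewiseQuadWith (fun x => ∑ i ∈ s, F i x) P :=
  fun x => IsQuadOn.sum s fun i hi => hF i hi x

end IsPiecewiseQuadWith

lemma exists_lt_and_le_succ {α : Type*} [LinearOrder α] (a : ℕ → α) {N : ℕ} {x : α}
    (h0 : a 0 < x) (hN : x ≤ a N) : ∃ j < N, a j < x ∧ x ≤ a (j + 1) := by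
  induction N with
  | zero => exact absurd hN (not_le.mpr h0)
  | succ N ih =>
    by_cases hx : x ≤ a N
    · obtain ⟨j, hj, hjx⟩ := ih hx
      exact ⟨j, hj.trans N.lt_succ_self, hjx⟩
    · exact ⟨N, N.lt_succ_self, not_le.mp hx, hN⟩

lemma IsPiecewiseQuad.exists_isPiecewiseQuadWith {f : ℝ → ℝ} {N : ℕ} (h : IsPiecewiseQuad f N) :
    ∃ P : Finset ℝ, P.card + 1 ≤ N ∧ IsPiecewiseQuadWith f P := by
  obtain ⟨a, ha0, haN, hstep, hquad⟩ := h
  have hmono : StrictMonoOn a (Set.Iic N) := strictMonoOn_Iic_of_lt_succ fun m hm => by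
    simpa [Order.succ_eq_add_one] using hstep m hm
  have hreal : ∀ j, 0 < j → j < N → ((a j).toReal : EReal) = a j := fun j hj0 hjN =>
    EReal.coe_toReal (haN ▸ (hmono (by simp [hjN.le]) (by simp) hjN).ne)
      (ha0 ▸ (hmono (by simp) (by simp [hjN.le]) hj0).ne')
  set P := (Ioo 0 N).image fun j => (a j).toReal
  have hmem : ∀ j, 0 < j → j < N → (a j).toReal ∈ P :=
    fun j hj0 hjN => mem_image_of_mem _ (mem_Ioo.mpr ⟨hj0, hjN⟩)
  refine ⟨P, ?_, fun x => ?_⟩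
  · have : P.card ≤ (Ioo 0 N).card := card_image_le
    rw [Nat.card_Ioo] at this
    have : 0 < N := Nat.pos_of_ne_zero fun h0 => by simp [h0, ha0] at haN
    omega
  obtain ⟨j, hjN, hlower, hupper⟩ :=
    exists_lt_and_le_succ a (ha0 ▸ EReal.bot_lt_coe x) (haN ▸ le_top : (x : EReal) ≤ a N)
  obtain ⟨c₀, c₁, c₂, hc⟩ := hquad j hjN
  refine ⟨c₀, c₁, c₂, fun z hz => hc z ?_ ?_⟩
  · rcases Nat.eq_zero_or_pos j with h0 | hj0
    · simp [h0, ha0]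
    · rw [← hreal j hj0 hjN] at hlower ⊢
      exact_mod_cast (hz _ (hmem j hj0 hjN)).1 (by exact_mod_cast hlower)
  · rcases (Nat.succ_le_of_lt hjN).lt_or_eq with hj1 | hj1
    · rw [← hreal (j + 1) j.succ_pos hj1] at hupper ⊢
      have := mt (hz _ (hmem (j + 1) j.succ_pos hj1)).2 (not_lt.mpr (by exact_mod_cast hupper))
      exact_mod_cast not_lt.mp this
    · rw [show j + 1 = N from hj1, haN]
      exact le_top

noncomputable def cutPoints (P : Finset ℝ) : ℕ → EReal
  | 0 => ⊥
  | i + 1 => if h : i < P.card then (P.orderEmbOfFin rfl ⟨i, h⟩ : EReal) else ⊤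

section CutPoints

variable (P : Finset ℝ)

lemma cutPoints_succ_of_lt {i : ℕ} (hi : i < P.card) :
    cutPoints P (i + 1) = P.orderEmbOfFin rfl ⟨i, hi⟩ :=
  dif_pos hi

lemma cutPoints_card_add_one : cutPoints P (P.card + 1) = ⊤ :=
  dif_neg (lt_irrefl _)

lemma cutPoints_monotone : Monotone (cutPoints P) := by
  refine monotone_nat_of_le_succ fun i => ?_
  cases i with
  | zero => exact bot_le
  | succ i =>
    by_cases hi : i + 1 < P.card
    · rw [cutPoints_succ_of_lt P hi, cutPoints_succ_of_lt P (Nat.lt_of_succ_lt hi),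
        EReal.coe_le_coe_iff]
      exact (P.orderEmbOfFin rfl).monotone (Fin.mk_le_mk.mpr i.le_succ)
    · simp [cutPoints, dif_neg hi]

lemma cutPoints_lt_succ {j : ℕ} (hj : j < P.card + 1) : cutPoints P j < cutPoints P (j + 1) := by
  cases j with
  | zero => simp only [cutPoints]; split_ifs <;> simp
  | succ j =>
    rw [cutPoints_succ_of_lt P (by omega)]
    by_cases hj' : j + 1 < P.card
    · rw [cutPoints_succ_of_lt P hj', EReal.coe_lt_coe_iff]
      exact (P.orderEmbOfFin rfl).strictMono (Fin.mk_lt_mk.mpr j.lt_succ_self)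
    · rw [show cutPoints P (j + 1 + 1) = ⊤ from dif_neg hj']
      exact EReal.coe_lt_top _

lemma orderEmbOfFin_lt_iff_of_mem_cutPoints {j : ℕ} {z : ℝ} (hz₁ : cutPoints P j < z)
    (hz₂ : (z : EReal) ≤ cutPoints P (j + 1)) (i : Fin P.card) :
    P.orderEmbOfFin rfl i < z ↔ (i : ℕ) < j := by
  have hi : ((P.orderEmbOfFin rfl i : ℝ) : EReal) = cutPoints P (i + 1) :=
    (cutPoints_succ_of_lt P i.isLt).symm
  constructor
  · intro hiz
    by_contra hji
    have := hz₂.trans (hi ▸ cutPoints_monotone P (Nat.succ_le_succ (not_lt.mp hji)))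
    exact absurd hiz (not_lt.mpr (by exact_mod_cast this))
  · intro hij
    exact_mod_cast (hi ▸ cutPoints_monotone P hij).trans_lt hz₁

end CutPoints

namespace IsPiecewiseQuadWith

variable {f : ℝ → ℝ} {P : Finset ℝ}

lemma isPiecewiseQuad_card_add_one (hf : IsPiecewiseQuadWith f P) :
    IsPiecewiseQuad f (P.card + 1) := by
  refine ⟨cutPoints P, rfl, cutPoints_card_add_one P, fun j hj => cutPoints_lt_succ P hj,
    fun j _ => ?_⟩
  by_cases hne : ∃ x : ℝ, cutPoints P j < x ∧ (x : EReal) ≤ cutPoints P (j + 1)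
  · obtain ⟨x, hx₁, hx₂⟩ := hne
    obtain ⟨c₀, c₁, c₂, hc⟩ := hf x
    refine ⟨c₀, c₁, c₂, fun z hz₁ hz₂ => hc z fun p hp => ?_⟩
    obtain ⟨i, rfl⟩ : p ∈ Set.range (P.orderEmbOfFin rfl) := by rwa [range_orderEmbOfFin]
    rw [orderEmbOfFin_lt_iff_of_mem_cutPoints P hx₁ hx₂,
      orderEmbOfFin_lt_iff_of_mem_cutPoints P hz₁ hz₂]
  · push Not at hne
    exact ⟨0, 0, 0, fun z hz₁ hz₂ => absurd hz₂ (not_le.mpr (hne z hz₁))⟩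

lemma isPiecewiseQuad (hf : IsPiecewiseQuadWith f P) {N : ℕ} (hN : P.card + 1 ≤ N) :
    IsPiecewiseQuad f N := by
  obtain ⟨P', hPP', hcard⟩ := Infinite.exists_superset_card_eq P (N - 1) (by omega)
  have := (hf.mono hPP').isPiecewiseQuad_card_add_one
  rwa [hcard, Nat.sub_add_cancel (by omega)] at this

end IsPiecewiseQuadWith

open Filter Topology in
lemma Set.OrdConnected.cell_subset_closure {J : Set ℝ} (hJ : J.OrdConnected) (hJo : IsOpen J)
    {x : ℝ} (hx : x ∈ J) : cell {sInf J, sSup J} x ⊆ closure J := by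
  intro y hy
  rcases le_total y x with hyx | hxy
  · obtain ⟨w, hwJ, hwy⟩ : ∃ w ∈ J, w < y := by
      by_cases hbdd : BddBelow J
      · obtain ⟨w, hwx, hwJ⟩ := (eventually_mem_nhdsWithin.and
          (nhdsWithin_le_nhds (hJo.mem_nhds hx) : ∀ᶠ w in 𝓝[<] x, w ∈ J)).exists
        have hinf : sInf J < x := (csInf_le hbdd hwJ).trans_lt hwx
        exact exists_lt_of_csInf_lt ⟨x, hx⟩ ((hy _ (by simp)).1 hinf)
      · exact not_bddBelow_iff.mp hbdd y
    exact subset_closure (hJ.out hwJ hx ⟨hwy.le, hyx⟩)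
  · by_cases hbdd : BddAbove J
    · have hysup : y ≤ sSup J :=
        not_lt.mp fun h => (not_lt.mpr (le_csSup hbdd hx)) ((hy _ (by simp)).2 h)
      exact (convex_iff_ordConnected.mpr hJ).closure.ordConnected.out (subset_closure hx)
        (csSup_mem_closure ⟨x, hx⟩ hbdd) ⟨hxy, hysup⟩
    · obtain ⟨w, hwJ, hyw⟩ := not_bddAbove_iff.mp hbdd y
      exact subset_closure (hJ.out hx hwJ ⟨hxy, hyw.le⟩)

lemma ConvexOn.exists_cells_sign_const {D : ℝ → ℝ} (hD : ConvexOn ℝ Set.univ D) :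
    ∃ B : Finset ℝ, B.card ≤ 2 ∧
      ∀ x, (∀ y ∈ cell B x, D y ≤ 0) ∨ (∀ y ∈ cell B x, 0 ≤ D y) := by
  have hcont : Continuous D := continuousOn_univ.mp (hD.continuousOn isOpen_univ)
  set J := {x | D x < 0}
  have hJ : J.OrdConnected := by simpa using (hD.convex_lt 0).ordConnected
  -- If `J` is unbounded, `sInf J` or `sSup J` is a junk value: a superfluous breakpoint is harmless.
  refine ⟨{sInf J, sSup J}, card_le_two, fun x => ?_⟩
  by_cases h : ∃ z ∈ cell {sInf J, sSup J} x, D z < 0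
  · obtain ⟨z, hz, hDz⟩ := h
    refine Or.inl fun y hy => closure_lt_subset_le hcont continuous_const ?_
    exact hJ.cell_subset_closure (isOpen_lt hcont continuous_const) hDz (cell_eq_of_mem hz ▸ hy)
  · push Not at h
    exact Or.inr h

lemma IsPiecewiseQuadWith.min {f g : ℝ → ℝ} {P : Finset ℝ} (hf : IsPiecewiseQuadWith f P)
    (hg : IsPiecewiseQuadWith g P) (hfg : ConvexOn ℝ Set.univ (f - g)) :
    ∃ B : Finset ℝ, B.card ≤ 2 ∧ IsPiecewiseQuadWith (fun x => min (f x) (g x)) (P ∪ B) := by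
  obtain ⟨B, hB, hsign⟩ := hfg.exists_cells_sign_const
  refine ⟨B, hB, fun x => ?_⟩
  have hsub : cell (P ∪ B) x ⊆ cell B x := cell_anti subset_union_right x
  rcases hsign x with hle | hge
  · exact (hf.mono subset_union_left x).congr fun y hy =>
      (min_eq_left (sub_nonpos.mp (hle y (hsub hy)))).symm
  · exact (hg.mono subset_union_left x).congr fun y hy =>
      (min_eq_right (sub_nonneg.mp (hge y (hsub hy)))).symm

lemma convexOn_sub_finset_inf' {ι : Type*} {s : Finset ι} (hs : s.Nonempty) {f : ℝ → ℝ}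
    {F : ι → ℝ → ℝ} (h : ∀ i ∈ s, ConvexOn ℝ Set.univ (f - F i)) :
    ConvexOn ℝ Set.univ (f - fun x => s.inf' hs (F · x)) := by
  induction hs using Finset.Nonempty.cons_induction with
  | singleton a => simpa using h a (mem_singleton_self a)
  | cons a s ha hs ih =>
    have hmax : (f - fun x => (cons a s ha).inf' (cons_nonempty ha) (F · x)) =
        (f - F a) ⊔ (f - fun x => s.inf' hs (F · x)) := by
      ext x
      simp only [inf'_cons (H := hs), Pi.sub_apply, Pi.sup_apply, max_sub_sub_left]
    rw [hmax]
    exact (h a (mem_cons_self a s)).sup (ih fun i hi => h i (mem_cons_of_mem hi))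

lemma IsPiecewiseQuadWith.finset_inf' {ι : Type*} [LinearOrder ι] {F : ι → ℝ → ℝ}
    {P : Finset ℝ} (s : Finset ι) (hs : s.Nonempty)
    (hquad : ∀ i ∈ s, IsPiecewiseQuadWith (F i) P)
    (hconv : ∀ i ∈ s, ∀ j ∈ s, i < j → ConvexOn ℝ Set.univ (F i - F j)) :
    ∃ B : Finset ℝ, B.card ≤ 2 * (s.card - 1) ∧
      IsPiecewiseQuadWith (fun x => s.inf' hs (F · x)) (P ∪ B) := by
  induction s using Finset.induction_on_min with
  | empty => exact absurd hs not_nonempty_empty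
  | insert a s has ih =>
    rcases s.eq_empty_or_nonempty with rfl | hs'
    · exact ⟨∅, by simp, by simpa using hquad a (mem_singleton_self a)⟩
    obtain ⟨B, hB, hE⟩ := ih hs' (fun i hi => hquad i (mem_insert_of_mem hi))
      fun i hi j hj => hconv i (mem_insert_of_mem hi) j (mem_insert_of_mem hj)
    have hconv' := convexOn_sub_finset_inf' hs' fun i hi =>
      hconv a (mem_insert_self a s) i (mem_insert_of_mem hi) (has i hi)
    obtain ⟨B', hB', hmin⟩ := ((hquad a (mem_insert_self a s)).mono subset_union_left).min hE hconv'
    refine ⟨B ∪ B', ?_, by simpa [inf'_insert (H := hs'), union_assoc] using hmin⟩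
    have hcard := card_union_le B B'
    have := hs'.card_pos
    rw [card_insert_of_notMem fun has' => lt_irrefl a (has a has')]
    omega

lemma exists_common_breakpoints {ι : Type*} {f : ι → ℝ → ℝ} {N : ℕ} (s : Finset ι)
    (h : ∀ i ∈ s, IsPiecewiseQuad (f i) N) :
    ∃ P : Finset ℝ, P.card ≤ s.card * (N - 1) ∧ ∀ i ∈ s, IsPiecewiseQuadWith (f i) P := by
  classical
  choose! P hPcard hP using fun i hi => (h i hi).exists_isPiecewiseQuadWith
  refine ⟨s.biUnion P, ?_, fun i hi => (hP i hi).mono (subset_biUnion_of_mem P hi)⟩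
  calc (s.biUnion P).card ≤ ∑ i ∈ s, (P i).card := card_biUnion_le
    _ ≤ s.card * (N - 1) := by
      simpa using sum_le_card_nsmul s (fun i => (P i).card) (N - 1) fun i hi => by
        have := hPcard i hi; omega

def prefixCosts (γ : ℝ → ℝ → ℝ) (y : ℕ → ℝ) (β : ℝ) (s : ℕ) : Set ℝ :=
  {c : ℝ | ∃ (k : ℕ) (τ : ℕ → ℕ), τ 0 = 0 ∧ τ k = s ∧ (∀ i < k, τ i < τ (i + 1)) ∧
    c = ∑ i ∈ range k, (segCost γ y (τ i) (τ (i + 1)) + β)}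

noncomputable def optCost (γ : ℝ → ℝ → ℝ) (y : ℕ → ℝ) (β : ℝ) (s : ℕ) : ℝ :=
  sInf (prefixCosts γ y β s)

noncomputable def costGivenLastChange (γ : ℝ → ℝ → ℝ) (y : ℕ → ℝ) (β : ℝ) (t s : ℕ) (θ : ℝ) :
    ℝ :=
  optCost γ y β s + ∑ j ∈ Ioc s t, γ (y j) θ + β

section Segmentation

variable (γ : ℝ → ℝ → ℝ) (y : ℕ → ℝ) (β : ℝ)

lemma prefixCosts_subset (s : ℕ) :
    prefixCosts γ y β s ⊆
      {0} ∪ ⋃ r ∈ range s, (· + (segCost γ y r s + β)) '' prefixCosts γ y β r := by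
  rintro _ ⟨k, τ, h0, hk, hstep, rfl⟩
  cases k with
  | zero => simp
  | succ k =>
    refine Or.inr (Set.mem_biUnion (mem_range.mpr (hk ▸ hstep k k.lt_succ_self)) ?_)
    refine ⟨_, ⟨k, τ, h0, rfl, fun i hi => hstep i (by omega), rfl⟩, ?_⟩
    rw [sum_range_succ, hk]

lemma prefixCosts_finite (s : ℕ) : (prefixCosts γ y β s).Finite := by
  induction s using Nat.strong_induction_on with
  | _ s ih =>
    refine ((Set.finite_singleton 0).union ?_).subset (prefixCosts_subset γ y β s)
    exact (finite_toSet (range s)).biUnion fun r hr => (ih r (mem_range.mp hr)).image _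

lemma optCost_mem_prefixCosts (s : ℕ) : optCost γ y β s ∈ prefixCosts γ y β s :=
  Set.Nonempty.csInf_mem ⟨_, s, id, rfl, rfl, fun i _ => i.lt_succ_self, rfl⟩
    (prefixCosts_finite γ y β s)

lemma optCost_le {s : ℕ} {c : ℝ} (hc : c ∈ prefixCosts γ y β s) : optCost γ y β s ≤ c :=
  csInf_le (prefixCosts_finite γ y β s).bddBelow hc

lemma condCost_eq_inf' {t : ℕ} (ht : 0 < t) (θ : ℝ) :
    condCost γ y β t θ =
      (range t).inf' (nonempty_range_iff.mpr ht.ne') (costGivenLastChange γ y β t · θ) := by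
  refine IsLeast.csInf_eq ⟨?_, ?_⟩
  · obtain ⟨s, hs, heq⟩ := exists_mem_eq_inf' (nonempty_range_iff.mpr ht.ne')
      (costGivenLastChange γ y β t · θ)
    obtain ⟨k, τ, h0, hk, hstep, hc⟩ := optCost_mem_prefixCosts γ y β s
    refine ⟨k, τ, ⟨h0, hk ▸ mem_range.mp hs, hstep⟩, ?_⟩
    rw [heq, costGivenLastChange, hc, hk]
  · rintro _ ⟨k, τ, ⟨h0, hkt, hstep⟩, rfl⟩
    refine (inf'_le _ (mem_range.mpr hkt)).trans ?_
    unfold costGivenLastChange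
    gcongr
    exact optCost_le γ y β ⟨k, τ, h0, rfl, hstep, rfl⟩

lemma convexOn_costGivenLastChange_sub {t s r : ℕ} (hsr : s ≤ r) (hrt : r ≤ t)
    (hconv : ∀ j ∈ Ioc s r, ConvexOn ℝ Set.univ (γ (y j))) :
    ConvexOn ℝ Set.univ (costGivenLastChange γ y β t s - costGivenLastChange γ y β t r) := by
  have hsum : ConvexOn ℝ Set.univ (fun θ => ∑ j ∈ Ioc s r, γ (y j) θ) := by
    simpa only [← Finset.sum_apply] using
      Finset.sum_induction _ (ConvexOn ℝ Set.univ) (fun _ _ => ConvexOn.add)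
        (convexOn_const 0 convex_univ) hconv
  have hdiff : costGivenLastChange γ y β t s - costGivenLastChange γ y β t r =
      fun θ => ∑ j ∈ Ioc s r, γ (y j) θ + (optCost γ y β s - optCost γ y β r) := by
    funext θ
    simp only [Pi.sub_apply, costGivenLastChange, ← sum_Ioc_consecutive _ hsr hrt]
    ring
  exact hdiff ▸ hsum.add_const _

end Segmentation

theorem condCost_piecewise_quad_of_convex_general
    (γ : ℝ → ℝ → ℝ) (L : ℕ)
    (n : ℕ) (y : ℕ → ℝ) (β : ℝ)
    (hconv : ∀ i, 1 ≤ i → i ≤ n → ConvexOn ℝ Set.univ (fun θ => γ (y i) θ))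
    (hquad : ∀ i, 1 ≤ i → i ≤ n → IsPiecewiseQuad (fun θ => γ (y i) θ) L)
    (t : ℕ) (ht : 1 ≤ t) (htn : t ≤ n) :
    IsPiecewiseQuad (fun θ => condCost γ y β t θ) (2 * t - 1 + t * (L - 1)) := by
  obtain ⟨P, hPcard, hP⟩ := exists_common_breakpoints (Ioc 0 t) fun i hi =>
    hquad i (mem_Ioc.mp hi).1 ((mem_Ioc.mp hi).2.trans htn)
  have hcand : ∀ s ∈ range t, IsPiecewiseQuadWith (costGivenLastChange γ y β t s) P :=
    fun s _ => ((IsPiecewiseQuadWith.const _).add (IsPiecewiseQuadWith.sum _ fun j hj =>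
      hP j (Ioc_subset_Ioc_left s.zero_le hj))).add (IsPiecewiseQuadWith.const β)
  obtain ⟨B, hBcard, hQ⟩ := IsPiecewiseQuadWith.finset_inf' (range t)
    (nonempty_range_iff.mpr (by omega)) hcand fun s _ r hr hsr =>
      convexOn_costGivenLastChange_sub γ y β hsr.le (mem_range.mp hr).le fun j hj => by
        have := mem_Ioc.mp hj
        have := mem_range.mp hr
        exact hconv j (by omega) (by omega)
  simp only [← condCost_eq_inf' γ y β ht] at hQ
  refine hQ.isPiecewiseQuad ?_
  have := card_union_le P B
  simp only [Nat.card_Ioc, Nat.sub_zero] at hPcard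
  simp only [card_range] at hBcard
  omega

/-- If each loss `θ ↦ γ(y_i; θ)` is convex and piecewise quadratic on `L` intervals,
then `θ ↦ Q_t(θ)` is piecewise quadratic on at most `2t − 1 + t(L−1)` intervals. -/
theorem condCost_piecewise_quad_of_convex
    (γ : ℝ → ℝ → ℝ) (L : ℕ) (hL : 1 ≤ L)
    (n : ℕ) (y : ℕ → ℝ) (β : ℝ) (hβ : 0 < β)
    (hconv : ∀ i, 1 ≤ i → i ≤ n → ConvexOn ℝ Set.univ (fun θ => γ (y i) θ))
    (hquad : ∀ i, 1 ≤ i → i ≤ n → IsPiecewiseQuad (fun θ => γ (y i) θ) L)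
    (t : ℕ) (ht : 1 ≤ t) (htn : t ≤ n) :
    IsPiecewiseQuad (fun θ => condCost γ y β t θ) (2 * t - 1 + t * (L - 1)) :=
  condCost_piecewise_quad_of_convex_general γ L n y β hconv hquad t ht htn
end

section
/- Let Z be a real random variable having a density f with respect to Lebesgue measure which is nondecreasing on (−∞, 0] and nonincreasing on [0, ∞) (a unimodal density with mode at 0). Then for every K > 0, E[Z² · 1_{|Z| ≤ K}] ≤ (K²/3) · P(|Z| ≤ K); equivalently, σ² = E[Z² | |Z| ≤ K] ≤ K²/3 whenever P(|Z| ≤ K) > 0. -/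
/-!
On `[0, K]` the weight `x²` is increasing and the density is decreasing, so by Chebyshev's
integral inequality `∫₀ᴷ x² f ≤ (1/K) ∫₀ᴷ x² · ∫₀ᴷ f = (K²/3) ∫₀ᴷ f`. Reflecting `x ↦ -x` gives
the same bound on `[-K, 0]`, and the change of variables along the density turns the sum of the
two bounds into the claim.
-/

open MeasureTheory Set intervalIntegral

/-- Chebyshev's integral inequality. -/
theorem intervalIntegral.sub_mul_integral_mul_le_integral_mul_integral {φ g : ℝ → ℝ} {a b : ℝ}
    (hab : a ≤ b) (hφc : ContinuousOn φ (Icc a b)) (hφ : MonotoneOn φ (Icc a b))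
    (hg : AntitoneOn g (Icc a b)) :
    (b - a) * ∫ x in a..b, φ x * g x ≤ (∫ x in a..b, φ x) * ∫ x in a..b, g x := by
  rcases hab.eq_or_lt with rfl | hlt
  · simp
  rw [← uIcc_of_le hab] at hφc
  have hφi : IntervalIntegrable φ volume a b := hφc.intervalIntegrable
  have hgi : IntervalIntegrable g volume a b :=
    (hg.mono (uIcc_of_le hab).subset).intervalIntegrable
  have hφgi : IntervalIntegrable (fun x => φ x * g x) volume a b := hgi.continuousOn_mul hφc
  obtain ⟨c, hc, hφc_eq⟩ := exists_eq_interval_average hlt.ne hφc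
  rw [uIoo_of_le hab] at hc
  replace hc := Ioo_subset_Icc_self hc
  set m := (∫ x in a..b, φ x) / (b - a) with hm
  rw [interval_average_eq_div] at hφc_eq
  -- Since `φ c` is the mean of `φ`, integrating this gives `∫ φ g - φ c * ∫ g ≤ 0`.
  have hpt : ∀ x ∈ Icc a b, (φ x - φ c) * (g x - g c) ≤ 0 := by
    intro x hx
    rcases le_total x c with hxc | hcx
    · exact mul_nonpos_of_nonpos_of_nonneg (sub_nonpos.mpr (hφ hx hc hxc))
        (sub_nonneg.mpr (hg hx hc hxc))
    · exact mul_nonpos_of_nonneg_of_nonpos (sub_nonneg.mpr (hφ hc hx hcx))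
        (sub_nonpos.mpr (hg hc hx hcx))
  have hint : ∫ x in a..b, (φ x - φ c) * (g x - g c) ≤ 0 := by
    have hdi : IntervalIntegrable (fun x => (φ x - φ c) * (g x - g c)) volume a b :=
      (hgi.sub intervalIntegrable_const).continuousOn_mul (hφc.sub continuousOn_const)
    simpa using integral_mono_on hab hdi intervalIntegrable_const hpt
  have hexpand : ∫ x in a..b, (φ x - φ c) * (g x - g c)
      = (∫ x in a..b, φ x * g x) - m * ∫ x in a..b, g x := by
    have hsplit (x : ℝ) : (φ x - φ c) * (g x - g c) = φ x * g x - m * g x - g c * (φ x - m) := by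
      rw [hφc_eq]; ring
    simp only [hsplit]
    rw [integral_sub (hφgi.sub (hgi.const_mul m)) ((hφi.sub intervalIntegrable_const).const_mul _),
      integral_sub hφgi (hgi.const_mul m), integral_const_mul, integral_const_mul,
      integral_sub hφi intervalIntegrable_const, integral_const, smul_eq_mul, hm]
    field_simp
    ring
  rw [hexpand, hm] at hint
  field_simp at hint
  linarith

theorem AntitoneOn.integral_sq_mul_le {g : ℝ → ℝ} {K : ℝ} (hK : 0 ≤ K)
    (hg : AntitoneOn g (Icc 0 K)) :
    ∫ x in 0..K, x ^ 2 * g x ≤ K ^ 2 / 3 * ∫ x in 0..K, g x := by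
  rcases hK.eq_or_lt with rfl | hK
  · simp
  have h := sub_mul_integral_mul_le_integral_mul_integral hK.le
    (continuous_pow 2).continuousOn (pow_left_monotoneOn.mono Icc_subset_Ici_self) hg
  rw [integral_pow] at h
  refine le_of_mul_le_mul_left ?_ hK
  linarith

theorem integral_sq_mul_le_of_monotoneOn_of_antitoneOn {f : ℝ → ℝ} {K : ℝ} (hK : 0 ≤ K)
    (hmono : MonotoneOn f (Icc (-K) 0)) (hanti : AntitoneOn f (Icc 0 K)) :
    ∫ x in -K..K, x ^ 2 * f x ≤ K ^ 2 / 3 * ∫ x in -K..K, f x := by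
  have hleft : ∫ x in -K..0, x ^ 2 * f x ≤ K ^ 2 / 3 * ∫ x in -K..0, f x := by
    have hrefl : AntitoneOn (fun x => f (-x)) (Icc 0 K) := fun x hx y hy hxy =>
      hmono ⟨neg_le_neg hy.2, neg_nonpos.mpr hy.1⟩ ⟨neg_le_neg hx.2, neg_nonpos.mpr hx.1⟩
        (neg_le_neg hxy)
    have hcomp := integral_comp_neg (fun x => x ^ 2 * f x) (a := 0) (b := K)
    simp only [neg_sq, neg_zero] at hcomp
    simpa [hcomp] using hrefl.integral_sq_mul_le hK
  have hfi₁ : IntervalIntegrable f volume (-K) 0 :=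
    (hmono.mono (uIcc_of_le (by linarith)).subset).intervalIntegrable
  have hfi₂ : IntervalIntegrable f volume 0 K :=
    (hanti.mono (uIcc_of_le hK).subset).intervalIntegrable
  rw [← integral_add_adjacent_intervals hfi₁ hfi₂,
    ← integral_add_adjacent_intervals (hfi₁.continuousOn_mul (continuous_pow 2).continuousOn)
      (hfi₂.continuousOn_mul (continuous_pow 2).continuousOn), mul_add]
  exact add_le_add hleft (hanti.integral_sq_mul_le hK)

section Density

variable {Ω α : Type*} [MeasurableSpace Ω] [MeasurableSpace α] {ℙ : Measure Ω} {μ : Measure α}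
  {Z : Ω → α} {f : α → ℝ}

theorem integral_comp_eq_integral_mul_of_map_eq_withDensity (hZ : Measurable Z)
    (hf : Measurable f) (hf_nonneg : ∀ x, 0 ≤ f x)
    (hZf : ℙ.map Z = μ.withDensity (fun x => ENNReal.ofReal (f x)))
    {g : α → ℝ} (hg : Measurable g) :
    ∫ ω, g (Z ω) ∂ℙ = ∫ x, g x * f x ∂μ := by
  rw [← integral_map hZ.aemeasurable hg.aestronglyMeasurable, hZf,
    integral_withDensity_eq_integral_toReal_smul hf.ennreal_ofReal
      (ae_of_all _ fun _ => ENNReal.ofReal_lt_top)]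
  simp [ENNReal.toReal_ofReal (hf_nonneg _), mul_comm]

theorem toReal_measure_preimage_eq_setIntegral_of_map_eq_withDensity (hZ : Measurable Z)
    (hf : Measurable f) (hf_nonneg : ∀ x, 0 ≤ f x)
    (hZf : ℙ.map Z = μ.withDensity (fun x => ENNReal.ofReal (f x)))
    {s : Set α} (hs : MeasurableSet s) :
    (ℙ (Z ⁻¹' s)).toReal = ∫ x in s, f x ∂μ := by
  rw [← Measure.map_apply hZ hs, hZf, withDensity_apply _ hs,
    integral_eq_lintegral_of_nonneg_ae (ae_of_all _ hf_nonneg) hf.aestronglyMeasurable.restrict]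

theorem integral_indicator_comp_eq_setIntegral_mul_of_map_eq_withDensity (hZ : Measurable Z)
    (hf : Measurable f) (hf_nonneg : ∀ x, 0 ≤ f x)
    (hZf : ℙ.map Z = μ.withDensity (fun x => ENNReal.ofReal (f x)))
    {s : Set α} (hs : MeasurableSet s) {g : α → ℝ} (hg : Measurable g) :
    ∫ ω, s.indicator g (Z ω) ∂ℙ = ∫ x in s, g x * f x ∂μ := by
  rw [integral_comp_eq_integral_mul_of_map_eq_withDensity hZ hf hf_nonneg hZf (hg.indicator hs),
    ← MeasureTheory.integral_indicator hs]
  simp_rw [indicator_mul_left]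

end Density

theorem unimodal_truncated_second_moment_general
    {Ω : Type*} [MeasurableSpace Ω] (ℙ : Measure Ω)
    (Z : Ω → ℝ) (hZ : Measurable Z)
    (f : ℝ → ℝ) (hf_meas : Measurable f) (hf_nonneg : ∀ x : ℝ, 0 ≤ f x)
    (hf_density :
      Measure.map Z ℙ = volume.withDensity (fun x => ENNReal.ofReal (f x)))
    (hf_mono : MonotoneOn f (Set.Iic (0 : ℝ)))
    (hf_anti : AntitoneOn f (Set.Ici (0 : ℝ)))
    (K : ℝ) (hK : 0 < K) :
    (∫ ω, (if |Z ω| ≤ K then (Z ω) ^ 2 else 0) ∂ℙ) ≤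
      K ^ 2 / 3 * (ℙ {ω | |Z ω| ≤ K}).toReal ∧
    (0 < (ℙ {ω | |Z ω| ≤ K}).toReal →
      (∫ ω, (if |Z ω| ≤ K then (Z ω) ^ 2 else 0) ∂ℙ) /
          (ℙ {ω | |Z ω| ≤ K}).toReal ≤ K ^ 2 / 3) := by
  have hevent : {ω | |Z ω| ≤ K} = Z ⁻¹' Icc (-K) K := by ext; simp [abs_le]
  have hmoment : ∫ ω, (if |Z ω| ≤ K then (Z ω) ^ 2 else 0) ∂ℙ
      = ∫ x in -K..K, x ^ 2 * f x := by
    calc ∫ ω, (if |Z ω| ≤ K then (Z ω) ^ 2 else 0) ∂ℙ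
        = ∫ ω, (Icc (-K) K).indicator (· ^ 2) (Z ω) ∂ℙ := by
          simp only [indicator_apply, mem_Icc, abs_le]
      _ = ∫ x in Icc (-K) K, x ^ 2 * f x :=
        integral_indicator_comp_eq_setIntegral_mul_of_map_eq_withDensity hZ hf_meas hf_nonneg
          hf_density measurableSet_Icc (measurable_id.pow_const 2)
      _ = ∫ x in -K..K, x ^ 2 * f x := by
        rw [integral_Icc_eq_integral_Ioc, ← integral_of_le (by linarith)]
  have hprob : (ℙ {ω | |Z ω| ≤ K}).toReal = ∫ x in -K..K, f x := by
    rw [hevent, toReal_measure_preimage_eq_setIntegral_of_map_eq_withDensity hZ hf_meas hf_nonneg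
      hf_density measurableSet_Icc, integral_Icc_eq_integral_Ioc, ← integral_of_le (by linarith)]
  have hbound := integral_sq_mul_le_of_monotoneOn_of_antitoneOn hK.le
    (hf_mono.mono Icc_subset_Iic_self) (hf_anti.mono Icc_subset_Ici_self)
  rw [hmoment, hprob]
  exact ⟨hbound, fun hpos => (div_le_iff₀ hpos).mpr hbound⟩

/-- If `Z` has a unimodal density `f` with mode at `0` (nondecreasing on `(−∞,0]`,
nonincreasing on `[0,∞)`), then for every `K > 0`,
`E[Z²·1_{|Z| ≤ K}] ≤ (K²/3)·P(|Z| ≤ K)`; equivalently the conditional second moment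
`σ² = E[Z² | |Z| ≤ K]` is at most `K²/3` whenever `P(|Z| ≤ K) > 0`. -/
theorem unimodal_truncated_second_moment
    {Ω : Type*} [MeasurableSpace Ω] (ℙ : Measure Ω) [IsProbabilityMeasure ℙ]
    (Z : Ω → ℝ) (hZ : Measurable Z)
    (f : ℝ → ℝ) (hf_meas : Measurable f) (hf_nonneg : ∀ x : ℝ, 0 ≤ f x)
    (hf_density :
      Measure.map Z ℙ = volume.withDensity (fun x => ENNReal.ofReal (f x)))
    (hf_mono : MonotoneOn f (Set.Iic (0 : ℝ)))
    (hf_anti : AntitoneOn f (Set.Ici (0 : ℝ)))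
    (K : ℝ) (hK : 0 < K) :
    (∫ ω, (if |Z ω| ≤ K then (Z ω) ^ 2 else 0) ∂ℙ) ≤
      K ^ 2 / 3 * (ℙ {ω | |Z ω| ≤ K}).toReal ∧
    (0 < (ℙ {ω | |Z ω| ≤ K}).toReal →
      (∫ ω, (if |Z ω| ≤ K then (Z ω) ^ 2 else 0) ∂ℙ) /
          (ℙ {ω | |Z ω| ≤ K}).toReal ≤ K ^ 2 / 3) :=
  unimodal_truncated_second_moment_general ℙ Z hZ f hf_meas hf_nonneg hf_density hf_mono hf_anti K
    hK
end

section
/- Assume condition (A1) holds for the biweight loss with parameter K, i.e. M attains its minimum at 0 and M(θ) ≥ M(0) + min{c₁θ², c₂} for constants c₁, c₂ > 0. Then there exists a constant D > 0 such that v(θ) := E[X(θ)²] ≤ D · M(θ) for all θ ∈ ℝ. -/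
open MeasureTheory

/-- `M(θ) = E[min{(Z−θ)², K²}]`, the expectation of the biweight loss at shift `θ`. -/
noncomputable def biweightMean {Ω : Type*} [MeasurableSpace Ω] (ℙ : Measure Ω)
    (Z : Ω → ℝ) (K θ : ℝ) : ℝ :=
  ∫ ω, min ((Z ω - θ) ^ 2) (K ^ 2) ∂ℙ

/-- `v(θ) = E[X(θ)²]` where `X(θ) = min{(Z−θ)², K²} − min{Z², K²}`. -/
noncomputable def biweightVar {Ω : Type*} [MeasurableSpace Ω] (ℙ : Measure Ω)
    (Z : Ω → ℝ) (K θ : ℝ) : ℝ :=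
  ∫ ω, (min ((Z ω - θ) ^ 2) (K ^ 2) - min ((Z ω) ^ 2) (K ^ 2)) ^ 2 ∂ℙ

/-!
Both truncated losses `a = min{(Z-θ)², K²}` and `b = min{Z², K²}` lie in `[0, K²]`, so
`(a - b)² ≤ K² |a - b| ≤ K² (a + b)`. Taking expectations gives `v(θ) ≤ K² (M(θ) + M(0))`,
and `M(0) ≤ M(θ)` yields `v(θ) ≤ 2K² M(θ)`.
-/

lemma sq_sub_le_mul_add {α : Type*} [CommRing α] [LinearOrder α] [IsStrictOrderedRing α]
    {a b c : α} (ha : 0 ≤ a) (hb : 0 ≤ b) (hac : a ≤ c) (hbc : b ≤ c) :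
    (a - b) ^ 2 ≤ c * (a + b) := by
  nlinarith [mul_nonneg ha hb]

section

variable {Ω : Type*} [MeasurableSpace Ω] (ℙ : Measure Ω) {Z : Ω → ℝ} (K : ℝ)

lemma integrable_min_sq_sub [IsFiniteMeasure ℙ] (hZ : Measurable Z) (θ : ℝ) :
    Integrable (fun ω => min ((Z ω - θ) ^ 2) (K ^ 2)) ℙ := by
  refine (integrable_const (K ^ 2)).mono' ?_ (Filter.Eventually.of_forall fun ω => ?_)
  · exact (((hZ.sub_const θ).pow_const 2).min measurable_const).aestronglyMeasurable
  · rw [Real.norm_eq_abs, abs_of_nonneg (le_min (sq_nonneg _) (sq_nonneg _))]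
    exact min_le_right _ _

lemma biweightVar_le_mul_add [IsFiniteMeasure ℙ] (hZ : Measurable Z) (θ : ℝ) :
    biweightVar ℙ Z K θ ≤ K ^ 2 * (biweightMean ℙ Z K θ + biweightMean ℙ Z K 0) := by
  have hθ := integrable_min_sq_sub ℙ K hZ θ
  have h0 : Integrable (fun ω => min ((Z ω) ^ 2) (K ^ 2)) ℙ := by
    simpa using integrable_min_sq_sub ℙ K hZ 0
  calc biweightVar ℙ Z K θ
      ≤ ∫ ω, K ^ 2 * (min ((Z ω - θ) ^ 2) (K ^ 2) + min ((Z ω) ^ 2) (K ^ 2)) ∂ℙ :=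
        integral_mono_of_nonneg (Filter.Eventually.of_forall fun _ => sq_nonneg _)
          ((hθ.add h0).const_mul _) (Filter.Eventually.of_forall fun _ =>
            sq_sub_le_mul_add (le_min (sq_nonneg _) (sq_nonneg _))
              (le_min (sq_nonneg _) (sq_nonneg _)) (min_le_right _ _) (min_le_right _ _))
    _ = K ^ 2 * (biweightMean ℙ Z K θ + biweightMean ℙ Z K 0) := by
        rw [integral_const_mul, integral_add hθ h0]
        simp [biweightMean]

end

theorem variance_bounded_by_mean_general
    {Ω : Type*} [MeasurableSpace Ω] (ℙ : Measure Ω) [IsProbabilityMeasure ℙ]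
    (Z : Ω → ℝ) (hZ : Measurable Z) (K : ℝ) (hK : 0 < K)
    (hA1min : ∀ θ : ℝ, biweightMean ℙ Z K 0 ≤ biweightMean ℙ Z K θ) :
    ∃ D : ℝ, 0 < D ∧ ∀ θ : ℝ, biweightVar ℙ Z K θ ≤ D * biweightMean ℙ Z K θ := by
  refine ⟨2 * K ^ 2, by positivity, fun θ => ?_⟩
  calc biweightVar ℙ Z K θ
      ≤ K ^ 2 * (biweightMean ℙ Z K θ + biweightMean ℙ Z K 0) :=
        biweightVar_le_mul_add ℙ K hZ θ
    _ ≤ K ^ 2 * (biweightMean ℙ Z K θ + biweightMean ℙ Z K θ) := by gcongr; exact hA1min θ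
    _ = 2 * K ^ 2 * biweightMean ℙ Z K θ := by ring

/-- Under condition (A1) for the biweight loss there is a constant `D > 0` with
`v(θ) ≤ D·M(θ)` for all `θ`. -/
theorem variance_bounded_by_mean
    {Ω : Type*} [MeasurableSpace Ω] (ℙ : Measure Ω) [IsProbabilityMeasure ℙ]
    (Z : Ω → ℝ) (hZ : Measurable Z) (K : ℝ) (hK : 0 < K)
    (c₁ c₂ : ℝ) (hc₁ : 0 < c₁) (hc₂ : 0 < c₂)
    (hA1min : ∀ θ : ℝ, biweightMean ℙ Z K 0 ≤ biweightMean ℙ Z K θ)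
    (hA1 : ∀ θ : ℝ,
      biweightMean ℙ Z K 0 + min (c₁ * θ ^ 2) c₂ ≤ biweightMean ℙ Z K θ) :
    ∃ D : ℝ, 0 < D ∧ ∀ θ : ℝ, biweightVar ℙ Z K θ ≤ D * biweightMean ℙ Z K θ :=
  variance_bounded_by_mean_general ℙ Z hZ K hK hA1min
end
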